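/- arXiv:1608.04681 — 5 statements merged into one kernel-verified Lean document; each statement's English description precedes it below -/
import Mathlib

section
/- For every x with 0 < x < 1, one has tanh(x) < 3x·log(coth(x)). -/
/-!
With `v = exp (-2x)` one has `coth x = (1 + v) / (1 - v)`, so `log (coth x) = 2 artanh v ≥ 2v`
by the power series of `artanh`. It then suffices that `tanh x < 6x e^{-2x}`, i.e. with
`A = e^{2x}` that `A (A - 1) < 6x (A + 1)`. On `[0, 1]` convexity of `exp` gives
`A ≤ 1 + (e² - 1) x`, and `e² < 7.4` leaves enough room.
-/

noncomputable def coth (x : ℝ) : ℝ := Real.cosh x / Real.sinh x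

open Real

theorem self_le_artanh {x : ℝ} (h0 : 0 ≤ x) (h1 : x < 1) : x ≤ artanh x := by
  have hseries := hasSum_log_sub_log_of_abs_lt_one (abs_lt.2 ⟨by linarith, h1⟩)
  have hfirst := le_hasSum hseries 0 fun k _ => by positivity
  rw [artanh_eq_half_log ⟨by linarith, h1.le⟩, log_div (by linarith) (by linarith)]
  norm_num at hfirst
  linarith

theorem exp_mul_le_one_add_sub_one_mul {t : ℝ} (y : ℝ) (h0 : 0 ≤ t) (h1 : t ≤ 1) :
    exp (y * t) ≤ 1 + (exp y - 1) * t := by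
  have := convexOn_exp.2 (Set.mem_univ 0) (Set.mem_univ y) (sub_nonneg.2 h1) h0 (by ring)
  simp only [smul_eq_mul, mul_zero, zero_add, exp_zero, mul_one] at this
  rw [mul_comm y t]
  linarith

theorem exp_two_lt : exp 2 < 7.4 := by
  rw [show (2 : ℝ) = 1 + 1 by norm_num, exp_add]
  nlinarith [exp_pos 1, exp_one_lt_d9]

theorem tanh_eq_exp_two_mul (x : ℝ) : tanh x = (exp (2 * x) - 1) / (exp (2 * x) + 1) := by
  rw [tanh_eq, ← mul_div_mul_right _ _ (exp_pos x).ne']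
  simp only [sub_mul, add_mul, ← exp_add, neg_add_cancel, exp_zero, two_mul]

theorem coth_eq_exp_neg_two_mul (x : ℝ) :
    coth x = (1 + exp (-(2 * x))) / (1 - exp (-(2 * x))) := by
  rw [coth, cosh_eq, sinh_eq, div_div_div_cancel_right₀ two_ne_zero,
    ← mul_div_mul_right _ _ (exp_pos (-x)).ne']
  simp only [sub_mul, add_mul, ← exp_add, add_neg_cancel, exp_zero, two_mul, neg_add]

theorem log_coth_eq_two_mul_artanh {x : ℝ} (hx : 0 ≤ x) :
    log (coth x) = 2 * artanh (exp (-(2 * x))) := by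
  have hv : exp (-(2 * x)) ≤ 1 := exp_le_one_iff.2 (by linarith)
  rw [artanh_eq_half_log ⟨by linarith [exp_pos (-(2 * x))], hv⟩, coth_eq_exp_neg_two_mul]
  ring

theorem tanh_lt_six_mul_mul_exp_neg_two_mul {x : ℝ} (hx0 : 0 < x) (hx1 : x ≤ 1) :
    tanh x < 6 * x * exp (-(2 * x)) := by
  have hA := exp_mul_le_one_add_sub_one_mul 2 hx0.le hx1
  have hA1 : 1 < exp (2 * x) := one_lt_exp_iff.2 (by linarith)
  rw [tanh_eq_exp_two_mul, exp_neg, ← div_eq_mul_inv, div_lt_div_iff₀ (by linarith) (by linarith)]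
  nlinarith [exp_two_lt, mul_le_mul_of_nonneg_left hA (by linarith : (0 : ℝ) ≤ exp (2 * x)),
    mul_pos hx0 (by linarith : (0 : ℝ) < exp (2 * x))]

theorem tanh_lt_three_mul_log_coth (x : ℝ) (hx0 : 0 < x) (hx1 : x < 1) :
    Real.tanh x < 3 * x * Real.log (coth x) := by
  calc tanh x < 3 * x * (2 * exp (-(2 * x))) := by
        linarith [tanh_lt_six_mul_mul_exp_neg_two_mul hx0 hx1.le]
    _ ≤ 3 * x * (2 * artanh (exp (-(2 * x)))) := by
        gcongr
        exact self_le_artanh (exp_pos _).le (exp_lt_one_iff.2 (by linarith))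
    _ = 3 * x * log (coth x) := by rw [log_coth_eq_two_mul_artanh hx0.le]
end

section
/- For every δ with 0 < δ < 1, the integral ∫₀^δ (1/π)·log(coth(πy/4)) dy is at most (1/π)·δ·log(coth(πδ/4)) + (12/π²)·tanh(πδ/4), and hence is strictly less than (10/π)·δ·log(coth(πδ/4)). -/
/-!
On `(0, t]` we have `coth s ≤ cosh t / s`, because `cosh` increases and `s ≤ sinh s`. Integrating
the logarithm of this bound gives
`∫₀ᵗ log coth ≤ t log coth t + t log (sinh t / t) + t ≤ t log coth t + sinh t`.
After the substitution `s = πy/4` we have `t = πδ/4 < 4/5`, so `cosh t < 3`, i.e.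
`sinh t < 3 tanh t`, which is the first bound. The second follows from `tanh t ≤ t` and
`log coth t ≥ 1 - tanh t > 1/3`, where `tanh t < 2/3` amounts to `exp (2t) < 5`.
-/

open Real MeasureTheory intervalIntegral

namespace Real

theorem sinh_le_mul_cosh {x : ℝ} (hx : 0 ≤ x) : sinh x ≤ x * cosh x := by
  have hsinh : ∫ s in (0 : ℝ)..x, cosh s = sinh x := by
    simpa using integral_eq_sub_of_hasDerivAt (fun s _ ↦ hasDerivAt_sinh s)
      (continuous_cosh.intervalIntegrable 0 x)
  calc sinh x = ∫ s in (0 : ℝ)..x, cosh s := hsinh.symm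
    _ ≤ ∫ _ in (0 : ℝ)..x, cosh x := by
      refine integral_mono_on hx (continuous_cosh.intervalIntegrable 0 x) intervalIntegrable_const
        fun s hs ↦ cosh_le_cosh.2 ?_
      rw [abs_of_nonneg hs.1, abs_of_nonneg hx]
      exact hs.2
    _ = x * cosh x := by simp

theorem tanh_le_self {x : ℝ} (hx : 0 ≤ x) : tanh x ≤ x := by
  rw [tanh_eq_sinh_div_cosh, div_le_iff₀ (cosh_pos x)]
  exact sinh_le_mul_cosh hx

theorem cosh_lt_three {x : ℝ} (hx : |x| ≤ 1) : cosh x < 3 :=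
  calc cosh x ≤ cosh 1 := cosh_le_cosh.2 (by rwa [abs_one])
    _ ≤ exp 1 := by rw [cosh_eq]; linarith [exp_le_exp.2 (show (-1 : ℝ) ≤ 1 by norm_num)]
    _ < 3 := exp_one_lt_three

theorem sinh_le_three_mul_tanh {x : ℝ} (h0 : 0 ≤ x) (h1 : x ≤ 1) : sinh x ≤ 3 * tanh x := by
  rw [tanh_eq_sinh_div_cosh, mul_div_assoc', le_div_iff₀ (cosh_pos x), mul_comm 3]
  exact mul_le_mul_of_nonneg_left (cosh_lt_three (abs_le.2 ⟨by linarith, h1⟩)).le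
    (sinh_nonneg_iff.2 h0)

theorem exp_eight_fifths_lt_five : exp (8 / 5) < 5 := by
  have h : exp (8 / 5) ^ 5 = exp 1 ^ 8 := by
    rw [← exp_nat_mul, ← exp_nat_mul]; norm_num
  refine lt_of_pow_lt_pow_left₀ 5 (by norm_num) ?_
  calc exp (8 / 5) ^ 5 = exp 1 ^ 8 := h
    _ < 2.7182818286 ^ 8 := by gcongr; exact exp_one_lt_d9
    _ < 5 ^ 5 := by norm_num

theorem tanh_lt_two_thirds {x : ℝ} (hx : x ≤ 4 / 5) : tanh x < 2 / 3 := by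
  have h : exp x * exp x < 5 := by
    rw [← exp_add]
    exact (exp_le_exp.2 (by linarith)).trans_lt exp_eight_fifths_lt_five
  have hinv : exp x * exp (-x) = 1 := by rw [← exp_add, add_neg_cancel, exp_zero]
  rw [tanh_eq, div_lt_iff₀ (by positivity)]
  nlinarith [exp_pos (-x)]

end Real

theorem coth_eq_inv_tanh (x : ℝ) : coth x = (tanh x)⁻¹ := by
  rw [coth, tanh_eq_sinh_div_cosh, inv_div]

theorem one_le_coth {x : ℝ} (hx : 0 < x) : 1 ≤ coth x :=
  (one_le_div (sinh_pos_iff.2 hx)).2 (sinh_lt_cosh x).le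

theorem coth_le_cosh_div {s t : ℝ} (hs : 0 < s) (hst : s ≤ t) : coth s ≤ cosh t / s := by
  have hcosh : cosh s ≤ cosh t := cosh_le_cosh.2 <| by
    rwa [abs_of_pos hs, abs_of_pos (hs.trans_le hst)]
  exact div_le_div₀ (cosh_pos t).le hcosh hs (self_le_sinh_iff.2 hs.le)

theorem one_sub_tanh_le_log_coth {x : ℝ} (hx : 0 < x) : 1 - tanh x ≤ log (coth x) := by
  simpa [coth_eq_inv_tanh] using one_sub_inv_le_log_of_pos (zero_lt_one.trans_le (one_le_coth hx))

theorem one_third_lt_log_coth {x : ℝ} (h0 : 0 < x) (h1 : x ≤ 4 / 5) : 1 / 3 < log (coth x) := by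
  linarith [one_sub_tanh_le_log_coth h0, tanh_lt_two_thirds h1]

theorem integral_log_coth_le {t : ℝ} (ht : 0 < t) :
    ∫ s in (0 : ℝ)..t, log (coth s) ≤ t * log (coth t) + sinh t := by
  have hsinh : 0 < sinh t := sinh_pos_iff.2 ht
  have hdom : ∫ s in (0 : ℝ)..t, log (coth s) ≤ ∫ s in (0 : ℝ)..t, (log (cosh t) - log s) := by
    rw [integral_of_le ht.le, integral_of_le ht.le]
    refine integral_mono_of_nonneg ?_ (intervalIntegrable_const.sub intervalIntegrable_log').1 ?_
    all_goals filter_upwards [ae_restrict_mem measurableSet_Ioc] with s hs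
    · exact log_nonneg (one_le_coth hs.1)
    · rw [← log_div (cosh_pos t).ne' hs.1.ne']
      exact log_le_log (zero_lt_one.trans_le (one_le_coth hs.1)) (coth_le_cosh_div hs.1 hs.2)
  have hval : ∫ s in (0 : ℝ)..t, (log (cosh t) - log s) = t * log (cosh t) - (t * log t - t) := by
    rw [integral_sub intervalIntegrable_const intervalIntegrable_log',
      intervalIntegral.integral_const, integral_log]
    simp
  have hratio : t * (log (sinh t) - log t) ≤ sinh t - t := by
    have h := log_le_sub_one_of_pos (div_pos hsinh ht)
    rw [log_div hsinh.ne' ht.ne'] at h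
    calc t * (log (sinh t) - log t) ≤ t * (sinh t / t - 1) := by gcongr
      _ = sinh t - t := by field_simp
  have hcoth : log (coth t) = log (cosh t) - log (sinh t) := log_div (cosh_pos t).ne' hsinh.ne'
  rw [hcoth]
  linarith

theorem integral_log_coth_bound (δ : ℝ) (hδ0 : 0 < δ) (hδ1 : δ < 1) :
    (∫ y in (0:ℝ)..δ, (1 / Real.pi) * Real.log (coth (Real.pi * y / 4))) ≤
      (1 / Real.pi) * δ * Real.log (coth (Real.pi * δ / 4)) +
        (12 / Real.pi ^ 2) * Real.tanh (Real.pi * δ / 4) ∧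
    (∫ y in (0:ℝ)..δ, (1 / Real.pi) * Real.log (coth (Real.pi * y / 4))) <
      (10 / Real.pi) * δ * Real.log (coth (Real.pi * δ / 4)) := by
  set t := π * δ / 4 with ht
  have ht0 : 0 < t := by positivity
  have ht1 : t ≤ 4 / 5 := by nlinarith [pi_lt_d2]
  have hsubst : ∫ y in (0 : ℝ)..δ, 1 / π * log (coth (π * y / 4))
      = 4 / π ^ 2 * ∫ s in (0 : ℝ)..t, log (coth s) := by
    simp_rw [intervalIntegral.integral_const_mul, mul_div_right_comm π,
      integral_comp_mul_left (fun s ↦ log (coth s)) (div_ne_zero pi_ne_zero four_ne_zero),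
      smul_eq_mul, mul_zero]
    field_simp
    rfl
  have hK : 0 < 4 / π ^ 2 := by positivity
  have hδ : 1 / π * δ = 4 / π ^ 2 * t := by rw [ht]; field_simp
  have hI : ∫ s in (0 : ℝ)..t, log (coth s) ≤ t * log (coth t) + 3 * tanh t :=
    (integral_log_coth_le ht0).trans (by gcongr; exact sinh_le_three_mul_tanh ht0.le (by linarith))
  have hL := one_third_lt_log_coth ht0 ht1
  have htanh := tanh_le_self ht0.le
  rw [hsubst, show 12 / π ^ 2 = 4 / π ^ 2 * 3 by ring,
    show 10 / π * δ = 10 * (1 / π * δ) by ring, hδ]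
  constructor
  · nlinarith
  · nlinarith [mul_pos hK ht0]
end

section
/- Let 1/2 < α ≤ 1 (so that 1/α − 1 ≥ 0, in fact 2^{1/α−1} > 1 when α < 1). For every integer n ≥ 2, the sum over j from 2 to n of binom(n,j)·j^{(j−1)/α + 1}·(n+1−j)^{(n+1−j)/α} is strictly less than (2e/(2^{1/α−1} − 1))·n^{n/α + 1}. -/
/-!
Put `γ = 1/α - 1` and `b = n + 1 - j`. Each summand factors as
`binom(n,j) j^j b^b · (j^(j-1) b^b)^γ`. Stirling's inequality together with `(k+1)^k ≤ e k^k`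
bounds the first factor by `e n^(n+1)`. Since `min(j-1, b)` is at most about `n/2`,
`2^min(j-1,b) j^(j-1) b^b ≤ n^n`, so the second factor is at most `n^(nγ) 2^(-γ min(j-1,b))`.
The sum is then at most `e n^(n/α+1)` times two geometric series of ratio `2^(-γ)`.
-/

open Finset Real

lemma Nat.choose_mul_pow_mul_pow_le {n j : ℕ} (h : j ≤ n) :
    n.choose j * j ^ j * (n - j) ^ (n - j) ≤ n ^ n := by
  calc n.choose j * j ^ j * (n - j) ^ (n - j) = j ^ j * (n - j) ^ (n - j) * n.choose j := by ring
    _ ≤ ∑ k ∈ range (n + 1), j ^ k * (n - j) ^ (n - k) * n.choose k :=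
      single_le_sum (f := fun k => j ^ k * (n - j) ^ (n - k) * n.choose k)
        (fun _ _ => Nat.zero_le _) (mem_range.2 (Nat.lt_succ_of_le h))
    _ = (j + (n - j)) ^ n := by simpa using (add_pow j (n - j) n).symm
    _ = n ^ n := by rw [Nat.add_sub_cancel' h]

lemma succ_pow_le_exp_one_mul_pow (k : ℕ) : ((k : ℝ) + 1) ^ k ≤ exp 1 * (k : ℝ) ^ k := by
  rcases k.eq_zero_or_pos with rfl | hk
  · simp
  have hk0 : (k : ℝ) ≠ 0 := by positivity
  calc ((k : ℝ) + 1) ^ k = (1 + (k : ℝ)⁻¹) ^ k * (k : ℝ) ^ k := by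
        rw [← mul_pow]; congr 1; field_simp
    _ ≤ exp 1 * (k : ℝ) ^ k := by gcongr; exact one_add_inv_pow_le_exp

lemma choose_mul_pow_mul_pow_le_exp_one {n j b : ℕ} (hj : 1 ≤ j) (hb : 1 ≤ b)
    (hjb : j + b = n + 1) :
    (n.choose j : ℝ) * (j : ℝ) ^ j * (b : ℝ) ^ b ≤ exp 1 * (n : ℝ) ^ (n + 1) := by
  obtain ⟨k, rfl⟩ : ∃ k, b = k + 1 := ⟨b - 1, by omega⟩
  have hk : n - j = k := by omega
  have hstirling : (n.choose j : ℝ) * (j : ℝ) ^ j * (k : ℝ) ^ k ≤ (n : ℝ) ^ n := by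
    exact_mod_cast hk ▸ Nat.choose_mul_pow_mul_pow_le (by omega : j ≤ n)
  have hkn : (k : ℝ) + 1 ≤ n := by exact_mod_cast (by omega : k + 1 ≤ n)
  calc (n.choose j : ℝ) * (j : ℝ) ^ j * ((k + 1 : ℕ) : ℝ) ^ (k + 1)
      = (n.choose j : ℝ) * (j : ℝ) ^ j * ((k : ℝ) + 1) ^ k * ((k : ℝ) + 1) := by
        push_cast; ring
    _ ≤ (n.choose j : ℝ) * (j : ℝ) ^ j * (exp 1 * (k : ℝ) ^ k) * n := by
        gcongr
        exact succ_pow_le_exp_one_mul_pow k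
    _ = exp 1 * ((n.choose j : ℝ) * (j : ℝ) ^ j * (k : ℝ) ^ k) * n := by ring
    _ ≤ exp 1 * (n : ℝ) ^ n * n := by gcongr
    _ = exp 1 * (n : ℝ) ^ (n + 1) := by ring

-- The balanced case `b = a + 1` of the next lemma: here `e < 4` absorbs `(1 + 1/(2a+1))^(2a+1)`.
lemma two_pow_mul_succ_pow_le {a : ℕ} (ha : 1 ≤ a) :
    2 ^ a * (a + 1) ^ (2 * a + 1) ≤ (2 * a + 1) ^ (2 * a + 1) := by
  have hexp : exp 1 ≤ 2 ^ (a + 1) := by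
    calc exp 1 ≤ 4 := (exp_one_lt_d9.trans (by norm_num)).le
      _ = 2 ^ 2 := by norm_num
      _ ≤ 2 ^ (a + 1) := pow_le_pow_right₀ (by norm_num) (by omega)
  have h := succ_pow_le_exp_one_mul_pow (2 * a + 1)
  suffices (2 : ℝ) ^ (a + 1) * (2 ^ a * (a + 1) ^ (2 * a + 1)) ≤
      2 ^ (a + 1) * (2 * a + 1) ^ (2 * a + 1) by
    exact_mod_cast le_of_mul_le_mul_left this (by positivity)
  calc (2 : ℝ) ^ (a + 1) * (2 ^ a * (a + 1) ^ (2 * a + 1))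
      = ((2 * a + 1 : ℕ) + 1) ^ (2 * a + 1) := by
        rw [show ((2 * a + 1 : ℕ) : ℝ) + 1 = 2 * (a + 1) by push_cast; ring, mul_pow,
          ← mul_assoc, ← pow_add]
        ring_nf
    _ ≤ exp 1 * ((2 * a + 1 : ℕ) : ℝ) ^ (2 * a + 1) := h
    _ ≤ 2 ^ (a + 1) * (2 * a + 1) ^ (2 * a + 1) := by push_cast; gcongr

lemma two_pow_min_mul_succ_pow_mul_pow_le {a b : ℕ} (ha : 1 ≤ a) (hb : 1 ≤ b) :
    2 ^ min a b * (a + 1) ^ a * b ^ b ≤ (a + b) ^ (a + b) := by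
  rcases le_or_gt b a with hba | hab
  · calc 2 ^ min a b * (a + 1) ^ a * b ^ b = (a + 1) ^ a * (2 * b) ^ b := by
          rw [min_eq_right hba, mul_pow]; ring
      _ ≤ (a + b) ^ a * (a + b) ^ b := by gcongr; omega
      _ = (a + b) ^ (a + b) := (pow_add _ _ _).symm
  rw [min_eq_left hab.le]
  rcases Nat.lt_or_ge (a + 1) b with hab | hba
  · calc 2 ^ a * (a + 1) ^ a * b ^ b = (2 * (a + 1)) ^ a * b ^ b := by rw [mul_pow]
      _ ≤ (a + b) ^ a * (a + b) ^ b := by gcongr <;> omega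
      _ = (a + b) ^ (a + b) := (pow_add _ _ _).symm
  · obtain rfl : b = a + 1 := by omega
    calc 2 ^ a * (a + 1) ^ a * (a + 1) ^ (a + 1) = 2 ^ a * (a + 1) ^ (2 * a + 1) := by ring
      _ ≤ (2 * a + 1) ^ (2 * a + 1) := two_pow_mul_succ_pow_le ha
      _ = (a + (a + 1)) ^ (a + (a + 1)) := by ring_nf

lemma rpow_natCast_div_eq_pow_mul_rpow {t : ℝ} (ht : 0 < t) (m : ℕ) (α : ℝ) :
    t ^ ((m : ℝ) / α) = t ^ m * (t ^ m) ^ (1 / α - 1) := by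
  rw [← rpow_natCast, ← rpow_mul ht.le, ← rpow_add ht]
  congr 1
  ring

lemma choose_mul_rpow_mul_rpow_le {α : ℝ} (hα0 : 0 < α) (hα1 : α ≤ 1) {n j : ℕ} (hj : 2 ≤ j)
    (hjn : j ≤ n) :
    (n.choose j : ℝ) * (j : ℝ) ^ (((j : ℝ) - 1) / α + 1) *
        ((n : ℝ) + 1 - (j : ℝ)) ^ (((n : ℝ) + 1 - (j : ℝ)) / α) ≤
      exp 1 * (n : ℝ) ^ ((n : ℝ) / α + 1) *
        ((2 : ℝ) ^ (1 / α - 1))⁻¹ ^ min (j - 1) (n + 1 - j) := by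
  obtain ⟨a, rfl⟩ : ∃ a, j = a + 1 := ⟨j - 1, by omega⟩
  obtain ⟨b, rfl⟩ : ∃ b, n = a + b := ⟨n - a, by omega⟩
  have hγ : 0 ≤ 1 / α - 1 := by rw [sub_nonneg, le_div_iff₀ hα0]; linarith
  set γ := 1 / α - 1
  have hcast_a : ((a + 1 : ℕ) : ℝ) - 1 = a := by push_cast; ring
  have hcast_b : ((a + b : ℕ) : ℝ) + 1 - ((a + 1 : ℕ) : ℝ) = b := by push_cast; ring
  have hmin : min (a + 1 - 1) (a + b + 1 - (a + 1)) = min a b := by omega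
  rw [hcast_a, hcast_b, hmin]
  have hb : 1 ≤ b := by omega
  have hJ : (0 : ℝ) < (a + 1 : ℕ) := by positivity
  have hB : (0 : ℝ) < b := by positivity
  have hN : (0 : ℝ) < (a + b : ℕ) := by positivity
  have hbinom :=
    choose_mul_pow_mul_pow_le_exp_one (n := a + b) (j := a + 1) (by omega) hb (by omega)
  have hbalance :
      ((a + 1 : ℕ) : ℝ) ^ a * (b : ℝ) ^ b ≤ ((a + b : ℕ) : ℝ) ^ (a + b) / 2 ^ min a b := by
    rw [le_div_iff₀ (by positivity), mul_comm, ← mul_assoc]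
    exact_mod_cast two_pow_min_mul_succ_pow_mul_pow_le (by omega) hb
  have hbalance_rpow : (((a + 1 : ℕ) : ℝ) ^ a * (b : ℝ) ^ b) ^ γ ≤
      (((a + b : ℕ) : ℝ) ^ (a + b)) ^ γ * ((2 : ℝ) ^ γ)⁻¹ ^ min a b := by
    calc _ ≤ (((a + b : ℕ) : ℝ) ^ (a + b) / 2 ^ min a b) ^ γ := by gcongr
      _ = _ := by
        rw [div_rpow (by positivity) (by positivity), ← rpow_pow_comm zero_le_two, inv_pow,
          div_eq_mul_inv]
  rw [rpow_add_one hJ.ne', rpow_add_one hN.ne', rpow_natCast_div_eq_pow_mul_rpow hJ,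
    rpow_natCast_div_eq_pow_mul_rpow hB, rpow_natCast_div_eq_pow_mul_rpow hN]
  calc _ = ((a + b).choose (a + 1) * ((a + 1 : ℕ) : ℝ) ^ (a + 1) * (b : ℝ) ^ b) *
        (((a + 1 : ℕ) : ℝ) ^ a * (b : ℝ) ^ b) ^ γ := by
        rw [mul_rpow (by positivity) (by positivity)]; ring
    _ ≤ (exp 1 * ((a + b : ℕ) : ℝ) ^ (a + b + 1)) *
        ((((a + b : ℕ) : ℝ) ^ (a + b)) ^ γ * ((2 : ℝ) ^ γ)⁻¹ ^ min a b) := by gcongr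
    _ = _ := by ring

lemma sum_Icc_inv_pow_min_lt {y : ℝ} (hy : 1 < y) (n : ℕ) :
    ∑ j ∈ Icc 2 n, y⁻¹ ^ min (j - 1) (n + 1 - j) < 2 / (y - 1) := by
  have hx0 : 0 < y⁻¹ := by positivity
  have hx1 : y⁻¹ < 1 := inv_lt_one_of_one_lt₀ hy
  have hreflect : ∑ j ∈ Icc 2 n, y⁻¹ ^ (n + 1 - j) = ∑ j ∈ Icc 2 n, y⁻¹ ^ (j - 1) :=
    sum_nbij' (fun j => n + 2 - j) (fun j => n + 2 - j)
      (fun j hj => by rw [mem_Icc] at hj ⊢; omega) (fun j hj => by rw [mem_Icc] at hj ⊢; omega)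
      (fun j hj => by rw [mem_Icc] at hj; omega) (fun j hj => by rw [mem_Icc] at hj; omega)
      (fun j hj => by rw [mem_Icc] at hj; congr 1; omega)
  have hgeom : ∑ j ∈ Icc 2 n, y⁻¹ ^ (j - 1) < 1 / (y - 1) := by
    calc ∑ j ∈ Icc 2 n, y⁻¹ ^ (j - 1) = y⁻¹ * ∑ i ∈ range (n + 1 - 2), y⁻¹ ^ i := by
          rw [← Finset.Ico_add_one_right_eq_Icc, sum_Ico_eq_sum_range, mul_sum]
          refine sum_congr rfl fun i _ => ?_
          rw [show 2 + i - 1 = i + 1 by omega, pow_succ']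
      _ < y⁻¹ * (1 / (1 - y⁻¹)) := by
          gcongr
          rw [lt_div_iff₀ (sub_pos.2 hx1), geom_sum_mul_neg]
          linarith [pow_pos hx0 (n + 1 - 2)]
      _ = 1 / (y - 1) := by field_simp
  calc ∑ j ∈ Icc 2 n, y⁻¹ ^ min (j - 1) (n + 1 - j)
      ≤ ∑ j ∈ Icc 2 n, (y⁻¹ ^ (j - 1) + y⁻¹ ^ (n + 1 - j)) := by
        refine sum_le_sum fun j _ => ?_
        rcases min_choice (j - 1) (n + 1 - j) with h | h <;> rw [h]
        · exact le_add_of_nonneg_right (by positivity)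
        · exact le_add_of_nonneg_left (by positivity)
    _ = 2 * ∑ j ∈ Icc 2 n, y⁻¹ ^ (j - 1) := by rw [sum_add_distrib, hreflect]; ring
    _ < 2 * (1 / (y - 1)) := by gcongr
    _ = 2 / (y - 1) := by ring

theorem gevrey_sum_bound (α : ℝ) (hα1 : 1 / 2 < α) (hα2 : α < 1) (n : ℕ) (hn : 2 ≤ n) :
    ∑ j ∈ Finset.Icc 2 n, (n.choose j : ℝ) * (j : ℝ) ^ (((j : ℝ) - 1) / α + 1) *
        ((n : ℝ) + 1 - (j : ℝ)) ^ (((n : ℝ) + 1 - (j : ℝ)) / α) <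
      (2 * Real.exp 1 / (2 ^ (1 / α - 1) - 1)) * (n : ℝ) ^ ((n : ℝ) / α + 1) := by
  have hα0 : 0 < α := by linarith
  have hy : 1 < (2 : ℝ) ^ (1 / α - 1) :=
    one_lt_rpow one_lt_two (by rw [sub_pos, lt_div_iff₀ hα0]; linarith)
  have hn0 : (0 : ℝ) < n := by exact_mod_cast (by omega : 0 < n)
  have hM : 0 < exp 1 * (n : ℝ) ^ ((n : ℝ) / α + 1) := by positivity
  calc _ ≤ ∑ j ∈ Icc 2 n,
        exp 1 * (n : ℝ) ^ ((n : ℝ) / α + 1) *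
          ((2 : ℝ) ^ (1 / α - 1))⁻¹ ^ min (j - 1) (n + 1 - j) :=
        sum_le_sum fun j hj => choose_mul_rpow_mul_rpow_le hα0 hα2.le
          (mem_Icc.1 hj).1 (mem_Icc.1 hj).2
    _ < exp 1 * (n : ℝ) ^ ((n : ℝ) / α + 1) * (2 / (2 ^ (1 / α - 1) - 1)) := by
        rw [← mul_sum]; exact mul_lt_mul_of_pos_left (sum_Icc_inv_pow_min_lt hy n) hM
    _ = _ := by ring
end

section
/- Riccati-type comparison with forcing: let v : [0,T] → ℝ be continuously differentiable with v(t) < 0 for all t, and suppose v'(t) = −v(t)² − K(t) where |K(t)| ≤ ε·v(t)² for all t, with 0 < ε < 1. Then for all t ∈ [0,T], v(0)/(1 + (1+ε)·v(0)·t) ≤ v(t) ≤ v(0)/(1 + (1−ε)·v(0)·t), whenever the denominators are positive on [0,t]. -/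
/-!
Along a negative solution of `v' = -v² - K`, the reciprocal `w = 1 / v` satisfies
`w' = 1 + K / v²`, and `|K / v²| ≤ ε`. So `w` grows at a rate between `1 - ε` and `1 + ε`,
which pins `w t` between `w 0 + (1 - ε) t` and `w 0 + (1 + ε) t`; inverting these negative
quantities gives the two bounds on `v t`.
-/

open Set

theorem HasDerivAt.inv_sub_id_of_riccati {v : ℝ → ℝ} {k t : ℝ}
    (hv : HasDerivAt v (-(v t) ^ 2 - k) t) (hvt : v t ≠ 0) :
    HasDerivAt (fun s ↦ (v s)⁻¹ - s) (k / v t ^ 2) t :=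
  ((hv.inv hvt).sub (hasDerivAt_id' t)).congr_deriv (by field_simp; ring)

theorem abs_inv_sub_inv_sub_le_of_riccati {v K : ℝ → ℝ} {ε a b : ℝ} (hab : a ≤ b)
    (hv' : ∀ t ∈ Icc a b, HasDerivAt v (-(v t) ^ 2 - K t) t)
    (hvne : ∀ t ∈ Icc a b, v t ≠ 0)
    (hKv : ∀ t ∈ Icc a b, |K t| ≤ ε * v t ^ 2) :
    |(v b)⁻¹ - (v a)⁻¹ - (b - a)| ≤ ε * (b - a) := by
  have hderiv : ∀ t ∈ Icc a b,
      HasDerivWithinAt (fun s ↦ (v s)⁻¹ - s) (K t / v t ^ 2) (Icc a b) t :=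
    fun t ht ↦ ((hv' t ht).inv_sub_id_of_riccati (hvne t ht)).hasDerivWithinAt
  have hbound : ∀ t ∈ Ico a b, ‖K t / v t ^ 2‖ ≤ ε := fun t ht ↦ by
    have hsq : 0 < v t ^ 2 := sq_pos_of_ne_zero (hvne t (Ico_subset_Icc_self ht))
    rw [Real.norm_eq_abs, abs_div, abs_of_pos hsq, div_le_iff₀ hsq]
    exact hKv t (Ico_subset_Icc_self ht)
  have hmvt := norm_image_sub_le_of_norm_deriv_le_segment' hderiv hbound b (right_mem_Icc.2 hab)
  rw [Real.norm_eq_abs] at hmvt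
  convert hmvt using 2
  ring

theorem div_one_add_mul_eq_inv_inv_add_mul {a : ℝ} (ha : a ≠ 0) (c t : ℝ) :
    a / (1 + c * a * t) = (a⁻¹ + c * t)⁻¹ := by
  rw [show a⁻¹ + c * t = (1 + c * a * t) / a by field_simp, inv_div]

theorem inv_add_mul_neg {a c t : ℝ} (ha : a < 0) (hden : 0 < 1 + c * a * t) :
    a⁻¹ + c * t < 0 := by
  rw [← inv_lt_zero', ← div_one_add_mul_eq_inv_inv_add_mul ha.ne]
  exact div_neg_of_neg_of_pos ha hden

theorem div_one_add_mul_le_iff {a b c t : ℝ} (ha : a < 0) (hb : b < 0)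
    (hden : 0 < 1 + c * a * t) :
    a / (1 + c * a * t) ≤ b ↔ b⁻¹ ≤ a⁻¹ + c * t := by
  rw [div_one_add_mul_eq_inv_inv_add_mul ha.ne, inv_le_of_neg (inv_add_mul_neg ha hden) hb]

theorem le_div_one_add_mul_iff {a b c t : ℝ} (ha : a < 0) (hb : b < 0)
    (hden : 0 < 1 + c * a * t) :
    b ≤ a / (1 + c * a * t) ↔ a⁻¹ + c * t ≤ b⁻¹ := by
  rw [div_one_add_mul_eq_inv_inv_add_mul ha.ne, le_inv_of_neg hb (inv_add_mul_neg ha hden)]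

theorem riccati_comparison_general (T ε : ℝ)
    (v K : ℝ → ℝ)
    (hv' : ∀ t ∈ Set.Icc 0 T, HasDerivAt v (-(v t) ^ 2 - K t) t)
    (hvneg : ∀ t ∈ Set.Icc 0 T, v t < 0)
    (hKv : ∀ t ∈ Set.Icc 0 T, |K t| ≤ ε * (v t) ^ 2)
    (hden : ∀ t ∈ Set.Icc 0 T,
      0 < 1 + (1 + ε) * v 0 * t ∧ 0 < 1 + (1 - ε) * v 0 * t) :
    ∀ t ∈ Set.Icc 0 T,
      v 0 / (1 + (1 + ε) * v 0 * t) ≤ v t ∧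
        v t ≤ v 0 / (1 + (1 - ε) * v 0 * t) := by
  rintro t ⟨ht0, htT⟩
  have hsub : Icc 0 t ⊆ Icc 0 T := Icc_subset_Icc_right htT
  have hv0 : v 0 < 0 := hvneg 0 ⟨le_rfl, ht0.trans htT⟩
  have hvt : v t < 0 := hvneg t ⟨ht0, htT⟩
  have hw := abs_inv_sub_inv_sub_le_of_riccati ht0 (fun s hs ↦ hv' s (hsub hs))
    (fun s hs ↦ (hvneg s (hsub hs)).ne) (fun s hs ↦ hKv s (hsub hs))
  rw [sub_zero, abs_le] at hw
  obtain ⟨hden_plus, hden_minus⟩ := hden t ⟨ht0, htT⟩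
  constructor
  · rw [div_one_add_mul_le_iff hv0 hvt hden_plus]
    linarith
  · rw [le_div_one_add_mul_iff hv0 hvt hden_minus]
    linarith

/-- Riccati-type comparison with forcing. -/
theorem riccati_comparison (T ε : ℝ) (hT : 0 < T) (hε0 : 0 < ε) (hε1 : ε < 1)
    (v K : ℝ → ℝ) (hK : ContinuousOn K (Set.Icc 0 T))
    (hv' : ∀ t ∈ Set.Icc 0 T, HasDerivAt v (-(v t) ^ 2 - K t) t)
    (hvneg : ∀ t ∈ Set.Icc 0 T, v t < 0)
    (hKv : ∀ t ∈ Set.Icc 0 T, |K t| ≤ ε * (v t) ^ 2)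
    (hden : ∀ t ∈ Set.Icc 0 T,
      0 < 1 + (1 + ε) * v 0 * t ∧ 0 < 1 + (1 - ε) * v 0 * t) :
    ∀ t ∈ Set.Icc 0 T,
      v 0 / (1 + (1 + ε) * v 0 * t) ≤ v t ∧
        v t ≤ v 0 / (1 + (1 - ε) * v 0 * t) :=
  riccati_comparison_general T ε v K hv' hvneg hKv hden
end

section
/- Under the hypotheses of the previous integral lemma (r C¹ with r(0)=1, (1+ε)m ≤ r' ≤ (1−ε)m < 0, and q ≤ r ≤ q/(1−ε) on [0,T]), the logarithmic case s = 1 holds: ∫₀^T q(t)^{−1} dt ≤ −(1/(1−ε)²)·(1/m)·( log(1/(1−ε)) − log q(T) ). -/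
/-!
Since `q ≥ (1 - ε) r` and `r' ≤ (1 - ε) m < 0`, the integrand is dominated pointwise by the
logarithmic derivative: `q⁻¹ ≤ r' / ((1 - ε)² m r)`. Integrating, `∫₀ᵀ q⁻¹ ≤ log r(T) / ((1 - ε)² m)`
because `r(0) = 1`, and `log r(T) ≥ log q(T) ≥ log q(T) + log (1 - ε)`.
-/

open Set MeasureTheory

theorem intervalIntegrable_deriv_of_nonpos {g g' : ℝ → ℝ} {a b : ℝ} (hab : a ≤ b)
    (hcont : ContinuousOn g (Icc a b)) (hderiv : ∀ x ∈ Ioo a b, HasDerivAt g (g' x) x)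
    (hneg : ∀ x ∈ Ioo a b, g' x ≤ 0) : IntervalIntegrable g' volume a b := by
  have hint : IntegrableOn (-g') (Ioc a b) :=
    intervalIntegral.integrableOn_deriv_of_nonneg hcont.neg (fun x hx ↦ (hderiv x hx).neg)
      fun x hx ↦ neg_nonneg.mpr (hneg x hx)
  simpa only [neg_neg] using ((intervalIntegrable_iff_integrableOn_Ioc_of_le hab).mpr hint).neg

section LogDeriv

variable {f f' : ℝ → ℝ} {a b : ℝ} (hab : a ≤ b) (hf : ∀ x ∈ Icc a b, HasDerivAt f (f' x) x)
  (hpos : ∀ x ∈ Icc a b, 0 < f x)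
include hf hpos

theorem hasDerivAt_log_comp_of_pos :
    ∀ x ∈ Icc a b, HasDerivAt (fun y ↦ Real.log (f y)) (f' x / f x) x :=
  fun x hx ↦ (hf x hx).log (hpos x hx).ne'

theorem continuousOn_log_comp_of_pos : ContinuousOn (fun y ↦ Real.log (f y)) (Icc a b) :=
  fun x hx ↦ (hasDerivAt_log_comp_of_pos hf hpos x hx).continuousAt.continuousWithinAt

include hab

theorem intervalIntegrable_deriv_div_of_nonpos (hf' : ∀ x ∈ Ioo a b, f' x ≤ 0) :
    IntervalIntegrable (fun x ↦ f' x / f x) volume a b :=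
  intervalIntegrable_deriv_of_nonpos hab (continuousOn_log_comp_of_pos hf hpos)
    (fun x hx ↦ hasDerivAt_log_comp_of_pos hf hpos x (Ioo_subset_Icc_self hx)) fun x hx ↦
      div_nonpos_of_nonpos_of_nonneg (hf' x hx) (hpos x (Ioo_subset_Icc_self hx)).le

theorem integral_deriv_div_eq_log_sub_of_nonpos (hf' : ∀ x ∈ Ioo a b, f' x ≤ 0) :
    ∫ x in a..b, f' x / f x = Real.log (f b) - Real.log (f a) :=
  intervalIntegral.integral_eq_sub_of_hasDerivAt_of_le hab (continuousOn_log_comp_of_pos hf hpos)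
    (fun x hx ↦ hasDerivAt_log_comp_of_pos hf hpos x (Ioo_subset_Icc_self hx))
    (intervalIntegrable_deriv_div_of_nonpos hab hf hpos hf')

end LogDeriv

theorem inv_le_div_of_mul_le {q r d m c : ℝ} (hc : 0 < c) (hm : m < 0) (hr : 0 < r)
    (hq : c * r ≤ q) (hd : d ≤ c * m) : q⁻¹ ≤ d / (c ^ 2 * m * r) := by
  have hden : c ^ 2 * m * r < 0 :=
    mul_neg_of_neg_of_pos (mul_neg_of_pos_of_neg (by positivity) hm) hr
  calc q⁻¹ ≤ (c * r)⁻¹ := inv_anti₀ (by positivity) hq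
    _ = c * m / (c ^ 2 * m * r) := by field_simp [hm.ne]
    _ ≤ d / (c ^ 2 * m * r) := div_le_div_of_nonpos_of_le hden.le hd

theorem integral_q_inv_le_general (T m ε : ℝ) (hT : 0 < T) (hm : m < 0)
    (hε0 : 0 < ε) (hε1 : ε < 1)
    (q r r' : ℝ → ℝ) (hq : ContinuousOn q (Set.Icc 0 T))
    (hqpos : ∀ t ∈ Set.Icc 0 T, 0 < q t)
    (hr0 : r 0 = 1)
    (hr' : ∀ t ∈ Set.Icc 0 T, HasDerivAt r (r' t) t)
    (hr'ub : ∀ t ∈ Set.Icc 0 T, r' t ≤ (1 - ε) * m)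
    (hqr : ∀ t ∈ Set.Icc 0 T, q t ≤ r t ∧ r t ≤ q t / (1 - ε)) :
    (∫ t in (0:ℝ)..T, (q t)⁻¹) ≤
      -(1 / (1 - ε) ^ 2) * (1 / m) *
        (Real.log (1 / (1 - ε)) - Real.log (q T)) := by
  have hc : 0 < 1 - ε := by linarith
  have hC : (1 - ε) ^ 2 * m < 0 := mul_neg_of_pos_of_neg (by positivity) hm
  have hTmem : T ∈ Icc (0:ℝ) T := right_mem_Icc.mpr hT.le
  have hrpos : ∀ t ∈ Icc 0 T, 0 < r t := fun t ht ↦ (hqpos t ht).trans_le (hqr t ht).1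
  have hr'neg : ∀ t ∈ Ioo 0 T, r' t ≤ 0 := fun t ht ↦
    (hr'ub t (Ioo_subset_Icc_self ht)).trans (mul_nonpos_of_nonneg_of_nonpos hc.le hm.le)
  have hpointwise : ∀ t ∈ Icc 0 T, (q t)⁻¹ ≤ r' t / r t / ((1 - ε) ^ 2 * m) := fun t ht ↦ by
    rw [div_div, mul_comm (r t)]
    exact inv_le_div_of_mul_le hc hm (hrpos t ht)
      ((le_div_iff₀' hc).mp (hqr t ht).2) (hr'ub t ht)
  have hlog : Real.log (1 - ε) + Real.log (q T) ≤ Real.log (r T) := by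
    rw [← Real.log_mul hc.ne' (hqpos T hTmem).ne']
    refine Real.log_le_log (mul_pos hc (hqpos T hTmem)) ?_
    nlinarith [hqpos T hTmem, (hqr T hTmem).1]
  calc (∫ t in (0:ℝ)..T, (q t)⁻¹)
      ≤ ∫ t in (0:ℝ)..T, r' t / r t / ((1 - ε) ^ 2 * m) := by
        refine intervalIntegral.integral_mono_on hT.le ?_ ?_ hpointwise
        · exact (hq.inv₀ fun t ht ↦ (hqpos t ht).ne').intervalIntegrable_of_Icc hT.le
        · exact (intervalIntegrable_deriv_div_of_nonpos hT.le hr' hrpos hr'neg).div_const _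
    _ = Real.log (r T) / ((1 - ε) ^ 2 * m) := by
        rw [intervalIntegral.integral_div,
          integral_deriv_div_eq_log_sub_of_nonpos hT.le hr' hrpos hr'neg, hr0, Real.log_one,
          sub_zero]
    _ ≤ (Real.log (1 - ε) + Real.log (q T)) / ((1 - ε) ^ 2 * m) :=
        div_le_div_of_nonpos_of_le hC.le hlog
    _ = _ := by
        rw [one_div (1 - ε), Real.log_inv]
        field_simp
        ring

/-- Lemma 3.4 of the paper, the logarithmic case `s = 1`. -/
theorem integral_q_inv_le (T m ε : ℝ) (hT : 0 < T) (hm : m < 0)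
    (hε0 : 0 < ε) (hε1 : ε < 1)
    (q r r' : ℝ → ℝ) (hq : ContinuousOn q (Set.Icc 0 T))
    (hqpos : ∀ t ∈ Set.Icc 0 T, 0 < q t) (hq1 : ∀ t ∈ Set.Icc 0 T, q t ≤ 1)
    (hr0 : r 0 = 1)
    (hr' : ∀ t ∈ Set.Icc 0 T, HasDerivAt r (r' t) t)
    (hr'lb : ∀ t ∈ Set.Icc 0 T, (1 + ε) * m ≤ r' t)
    (hr'ub : ∀ t ∈ Set.Icc 0 T, r' t ≤ (1 - ε) * m)
    (hqr : ∀ t ∈ Set.Icc 0 T, q t ≤ r t ∧ r t ≤ q t / (1 - ε)) :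
    (∫ t in (0:ℝ)..T, (q t)⁻¹) ≤
      -(1 / (1 - ε) ^ 2) * (1 / m) *
        (Real.log (1 / (1 - ε)) - Real.log (q T)) :=
  integral_q_inv_le_general T m ε hT hm hε0 hε1 q r r' hq hqpos hr0 hr' hr'ub hqr
end
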